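/- Define X(a,b) = a·b + ⟨a,b⟩·1 on the purely imaginary octonions Im(O). Then X is a 2-fold vector cross product: for all a, b ∈ Im(O), ⟨X(a,b), a⟩ = 0, ⟨X(a,b), b⟩ = 0, and ⟨X(a,b), X(a,b)⟩ = ⟨a,a⟩⟨b,b⟩ - ⟨a,b⟩². -/

import Mathlib

open Quaternion

noncomputable section

/-- Cayley–Dickson double of the quaternions: pairs `a + b·l`. -/
abbrev CD : Type := ℍ[ℝ] × ℍ[ℝ]

/-- Cayley–Dickson multiplication with `l² = s`:
`(a+bl)(c+dl) = (ac + s·conj(d)·b) + (da + b·conj(c))l`. -/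
def cdMul (s : ℝ) (x y : CD) : CD :=
  (x.1 * y.1 + s • (star y.2 * x.2), y.2 * x.1 + x.2 * star y.1)

/-- Conjugation: `conj(a+bl) = conj(a) - bl`. -/
def cdConj (x : CD) : CD := (star x.1, -x.2)

/-- The unit `1 = e₀`. -/
def cdOne : CD := (1, 0)

/-- The norm `N(x)`, i.e. the real number with `x·conj(x) = N(x)·1`. -/
def Nr (s : ℝ) (x : CD) : ℝ := ((cdMul s x (cdConj x)).1).re

/-- The inner product obtained by polarizing the norm:
`⟨x,y⟩ = (1/2)(N(x+y) - N(x) - N(y))`. -/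
def ip (s : ℝ) (x y : CD) : ℝ := (Nr s (x + y) - Nr s x - Nr s y) / 2

/-- A (split-)octonion is purely imaginary iff it is orthogonal to `1`. -/
def IsIm (s : ℝ) (x : CD) : Prop := ip s x cdOne = 0

/-- The 2-fold cross product `X(a,b) = a·b + ⟨a,b⟩·1` on the imaginary octonions. -/
def X (a b : CD) : CD := cdMul (-1) a b + (ip (-1) a b) • cdOne

/-!
The Cayley–Dickson norm is multiplicative, `N(xy) = N(x)N(y)`. Polarizing in one factor gives
`⟨xy, xz⟩ = N(x)⟨y, z⟩` and `⟨yx, zx⟩ = N(x)⟨y, z⟩`; with `z = 1` these make `ab` orthogonal to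
`a` and to `b` when `a, b ⊥ 1`. Moreover `⟨ab, 1⟩ = ⟨a, conj b⟩ = -⟨a, b⟩`, so expanding
`⟨ab + ⟨a,b⟩1, ab + ⟨a,b⟩1⟩` gives `N(a)N(b) - 2⟨a,b⟩² + ⟨a,b⟩²`.
-/

theorem Quaternion.re_mul_comm {R : Type*} [CommRing R] (a b : ℍ[R]) :
    (a * b).re = (b * a).re := by
  simp only [re_mul]; ring

section CayleyDickson

variable (s : ℝ)

theorem cdMul_add_left (x y z : CD) : cdMul s (x + y) z = cdMul s x z + cdMul s y z := by
  ext : 1 <;> simp only [cdMul, Prod.fst_add, Prod.snd_add, add_mul, mul_add, smul_add] <;> abel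

theorem cdMul_add_right (x y z : CD) : cdMul s x (y + z) = cdMul s x y + cdMul s x z := by
  ext : 1 <;>
    simp only [cdMul, Prod.fst_add, Prod.snd_add, star_add, add_mul, mul_add, smul_add] <;> abel

theorem cdMul_cdOne (x : CD) : cdMul s x cdOne = x := by
  simp [cdMul, cdOne]

theorem cdOne_cdMul (x : CD) : cdMul s cdOne x = x := by
  simp [cdMul, cdOne]

theorem Nr_eq_normSq (x : CD) : Nr s x = normSq x.1 - s * normSq x.2 := by
  simp only [Nr, cdMul, cdConj, self_mul_star, star_neg, neg_mul, star_mul_self, smul_neg,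
    star_star, neg_add_cancel, re_add, re_coe, re_neg, re_smul, smul_eq_mul]
  ring

theorem ip_eq_inner (x y : CD) : ip s x y = inner ℝ x.1 y.1 - s * inner ℝ x.2 y.2 := by
  simp only [ip, Nr_eq_normSq, Prod.fst_add, Prod.snd_add, normSq_add, inner_def]
  ring

theorem ip_comm (x y : CD) : ip s x y = ip s y x := by
  simp only [ip_eq_inner, real_inner_comm]

theorem ip_add_left (x y z : CD) : ip s (x + y) z = ip s x z + ip s y z := by
  simp only [ip_eq_inner, Prod.fst_add, Prod.snd_add, inner_add_left]
  ring

theorem ip_add_right (x y z : CD) : ip s x (y + z) = ip s x y + ip s x z := by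
  rw [ip_comm, ip_add_left, ip_comm, ip_comm s z]

theorem ip_smul_left (c : ℝ) (x y : CD) : ip s (c • x) y = c * ip s x y := by
  simp only [ip_eq_inner, Prod.smul_fst, Prod.smul_snd, real_inner_smul_left]
  ring

theorem ip_smul_right (c : ℝ) (x y : CD) : ip s x (c • y) = c * ip s x y := by
  rw [ip_comm, ip_smul_left, ip_comm]

theorem ip_neg_right (x y : CD) : ip s x (-y) = -ip s x y := by
  simpa using ip_smul_right s (-1) x y

theorem ip_self (x : CD) : ip s x x = Nr s x := by
  simp only [ip_eq_inner, Nr_eq_normSq, inner_def, normSq_def]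

theorem ip_cdOne (x : CD) : ip s x cdOne = x.1.re := by
  simp [ip_eq_inner, cdOne, inner_def]

theorem ip_cdOne_cdOne : ip s cdOne cdOne = 1 := by
  rw [ip_cdOne]; simp [cdOne]

theorem isIm_iff (x : CD) : IsIm s x ↔ x.1.re = 0 := by
  rw [IsIm, ip_cdOne]

theorem cdConj_eq_neg {x : CD} (hx : IsIm s x) : cdConj x = -x := by
  ext : 1
  · exact star_eq_neg.2 ((isIm_iff s x).1 hx)
  · rfl

theorem Nr_cdMul (x y : CD) : Nr s (cdMul s x y) = Nr s x * Nr s y := by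
  obtain ⟨a, b⟩ := x
  obtain ⟨c, d⟩ := y
  simp only [Nr_eq_normSq, cdMul, normSq_add, normSq_smul, map_mul, normSq_star,
    Quaternion.star_smul, star_mul, star_star, mul_smul_comm, re_smul, smul_eq_mul]
  -- the cross terms cancel because the real part of a quaternion product is cyclic
  have cyclic : (d * a * (c * star b)).re = (a * c * (star b * d)).re := by
    rw [mul_assoc, re_mul_comm]; simp only [mul_assoc]
  rw [cyclic]
  ring

theorem ip_cdMul_cdMul_left (x y z : CD) :
    ip s (cdMul s x y) (cdMul s x z) = Nr s x * ip s y z := by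
  simp only [ip, ← cdMul_add_right, Nr_cdMul]
  ring

theorem ip_cdMul_cdMul_right (x y z : CD) :
    ip s (cdMul s y x) (cdMul s z x) = Nr s x * ip s y z := by
  simp only [ip, ← cdMul_add_left, Nr_cdMul]
  ring

theorem ip_cdMul_self (x y : CD) :
    ip s (cdMul s x y) (cdMul s x y) = ip s x x * ip s y y := by
  rw [ip_cdMul_cdMul_left, ip_self s x]

theorem ip_cdMul_left_self (x y : CD) : ip s (cdMul s x y) x = Nr s x * ip s y cdOne := by
  simpa only [cdMul_cdOne] using ip_cdMul_cdMul_left s x y cdOne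

theorem ip_cdMul_right_self (x y : CD) : ip s (cdMul s x y) y = Nr s y * ip s x cdOne := by
  simpa only [cdOne_cdMul] using ip_cdMul_cdMul_right s y x cdOne

theorem ip_cdMul_cdOne (x y : CD) : ip s (cdMul s x y) cdOne = ip s x (cdConj y) := by
  rw [ip_cdOne, ip_eq_inner]
  simp only [cdMul, cdConj, inner_def, star_star, star_neg, mul_neg, re_add, re_smul, re_neg,
    smul_eq_mul, re_mul_comm (star y.2)]
  ring

end CayleyDickson

/-- `X(a,b) = a·b + ⟨a,b⟩·1` is a 2-fold vector cross product on `Im(O)`: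
it is orthogonal to both arguments and `⟨X(a,b),X(a,b)⟩ = ⟨a,a⟩⟨b,b⟩ - ⟨a,b⟩²`. -/
theorem cross_product_on_imaginary_octonions (a b : CD) (ha : IsIm (-1) a) (hb : IsIm (-1) b) :
    ip (-1) (X a b) a = 0 ∧ ip (-1) (X a b) b = 0 ∧
      ip (-1) (X a b) (X a b) = ip (-1) a a * ip (-1) b b - (ip (-1) a b) ^ 2 := by
  have hab : ip (-1) (cdMul (-1) a b) cdOne = -ip (-1) a b := by
    rw [ip_cdMul_cdOne, cdConj_eq_neg _ hb, ip_neg_right]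
  rw [IsIm] at ha hb
  refine ⟨?_, ?_, ?_⟩
  · rw [X, ip_add_left, ip_smul_left, ip_cdMul_left_self, ip_comm _ cdOne, ha, hb]; ring
  · rw [X, ip_add_left, ip_smul_left, ip_cdMul_right_self, ip_comm _ cdOne, ha, hb]; ring
  · rw [X]
    simp only [ip_add_left, ip_add_right, ip_smul_left, ip_smul_right, ip_cdMul_self,
      ip_comm _ cdOne (cdMul _ a b), hab, ip_cdOne_cdOne]
    ring
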